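/- Let p > 1 be a real number. Then the function y ↦ ln(1 + y^p)/(p·arcsinhₚ(y)^p) is strictly decreasing on (0, ∞). (Under the substitution y = sinhₚ(x), this says that x ↦ ln(coshₚ(x))/x^p is strictly decreasing for x > 0.) -/

import Mathlib

open Real MeasureTheory intervalIntegral

/-- The generalized inverse hyperbolic sine: `arcsinhp p y = ∫₀^y (1 + t^p)^(-1/p) dt`. -/
noncomputable def arcsinhp (p y : ℝ) : ℝ := ∫ t in (0:ℝ)..y, (1 + t ^ p) ^ (-1 / p)

lemma aux_pos {p : ℝ} (hp : 1 < p) {t : ℝ} (ht : -1 < t) : 0 < 1 + t ^ p := by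
  rcases le_or_gt 0 t with h | h
  · have := Real.rpow_nonneg h p; linarith
  · have habs : |t ^ p| ≤ |t| ^ p := Real.abs_rpow_le_abs_rpow t p
    have h1 : |t| < 1 := abs_lt.2 ⟨ht, by linarith⟩
    have h2 : |t| ^ p < 1 := Real.rpow_lt_one (abs_nonneg t) h1 (by linarith)
    have := neg_abs_le (t ^ p)
    linarith

lemma contg {p : ℝ} (hp : 1 < p) :
    ContinuousOn (fun t : ℝ => (1 + t ^ p) ^ (-1 / p)) (Set.Ioi (-1)) := by
  intro t ht
  have h1 : ContinuousAt (fun t : ℝ => t ^ p) t :=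
    Real.continuousAt_rpow_const t p (Or.inr (by linarith))
  exact ((continuousAt_const.add h1).rpow_const
    (Or.inl (aux_pos hp ht).ne')).continuousWithinAt

lemma hA_deriv {p : ℝ} (hp : 1 < p) {y : ℝ} (hy : 0 ≤ y) :
    HasDerivAt (arcsinhp p) ((1 + y ^ p) ^ (-1 / p)) y := by
  have hy1 : y ∈ Set.Ioi (-1 : ℝ) := by simp; linarith
  have hsub : Set.uIcc 0 y ⊆ Set.Ioi (-1 : ℝ) := by
    rw [Set.uIcc_of_le hy]
    exact fun t htt => lt_of_lt_of_le (by norm_num) htt.1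
  have hf : IntervalIntegrable (fun t : ℝ => (1 + t ^ p) ^ (-1 / p)) volume 0 y :=
    ((contg hp).mono hsub).intervalIntegrable
  exact integral_hasDerivAt_right hf
    (ContinuousOn.stronglyMeasurableAtFilter isOpen_Ioi (contg hp) y hy1)
    ((contg hp).continuousAt (isOpen_Ioi.mem_nhds hy1))

lemma A_pos {p : ℝ} (hp : 1 < p) {y : ℝ} (hy : 0 < y) : 0 < arcsinhp p y := by
  have hsub : Set.uIcc 0 y ⊆ Set.Ioi (-1 : ℝ) := by
    rw [Set.uIcc_of_le hy.le]
    exact fun t htt => lt_of_lt_of_le (by norm_num) htt.1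
  refine intervalIntegral_pos_of_pos_on (((contg hp).mono hsub).intervalIntegrable) ?_ hy
  intro t htt
  exact Real.rpow_pos_of_pos (aux_pos hp (by linarith [htt.1])) _

lemma A_le {p : ℝ} (hp : 1 < p) {y : ℝ} (hy : 0 ≤ y) : arcsinhp p y ≤ y := by
  have hsub : Set.uIcc 0 y ⊆ Set.Ioi (-1 : ℝ) := by
    rw [Set.uIcc_of_le hy]
    exact fun t htt => lt_of_lt_of_le (by norm_num) htt.1
  have h1 : arcsinhp p y ≤ ∫ _ in (0:ℝ)..y, (1:ℝ) := by
    refine intervalIntegral.integral_mono_on hy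
      (((contg hp).mono hsub).intervalIntegrable) intervalIntegrable_const ?_
    intro t htt
    have h0 : (0:ℝ) ≤ t := htt.1
    have hone : (1:ℝ) ≤ 1 + t ^ p := by
      have := Real.rpow_nonneg h0 p; linarith
    refine Real.rpow_le_one_of_one_le_of_nonpos hone ?_
    have h2 : (0:ℝ) < 1/p := by positivity
    rw [neg_div]
    linarith
  simpa using h1

lemma G_deriv {p : ℝ} (hp : 1 < p) {x : ℝ} (hx : 0 < x) :
    HasDerivAt
      (fun y : ℝ => Real.log (1 + y ^ p) - y ^ (p-1) * (1 + y ^ p) ^ (1/p-1) * arcsinhp p y)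
      ((p-1) * (x ^ (p-2) * (1 + x ^ p) ^ (1/p-2)) *
        (x * (1 + x ^ p) ^ (1-1/p) - arcsinhp p x)) x := by
  have hxne : x ≠ 0 := hx.ne'
  have hz : (0:ℝ) < 1 + x ^ p := by positivity
  have hzne : (1:ℝ) + x ^ p ≠ 0 := hz.ne'
  have h1 : HasDerivAt (fun y : ℝ => y ^ p) (p * x ^ (p-1)) x :=
    Real.hasDerivAt_rpow_const (Or.inl hxne)
  have h2 : HasDerivAt (fun y : ℝ => 1 + y ^ p) (p * x ^ (p-1)) x := h1.const_add 1
  have h3 : HasDerivAt (fun y : ℝ => Real.log (1 + y ^ p)) (p * x ^ (p-1) / (1 + x ^ p)) x :=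
    h2.log hzne
  have h4 : HasDerivAt (fun y : ℝ => y ^ (p-1)) ((p-1) * x ^ (p-1-1)) x :=
    Real.hasDerivAt_rpow_const (Or.inl hxne)
  have h5 : HasDerivAt (fun y : ℝ => (1 + y ^ p) ^ (1/p-1))
      ((p * x ^ (p-1)) * (1/p-1) * (1 + x ^ p) ^ (1/p-1-1)) x :=
    h2.rpow_const (Or.inl hzne)
  have h6 := h4.mul h5
  have h7 := h6.mul (hA_deriv hp hx.le)
  have hG := h3.sub h7
  convert hG using 1
  case e'_4 => rfl
  case e'_5 => rfl
  case e'_8 => rfl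
  simp only [Pi.mul_apply]
  have i1 : x ^ (p-1) = x ^ (p-2) * x := by
    rw [show p-1 = (p-2)+1 by ring, Real.rpow_add hx, Real.rpow_one]
  have i2 : x ^ (p-1-1) = x ^ (p-2) := by rw [show p-1-1 = p-2 by ring]
  have i3 : (1 + x ^ p) ^ (1/p-1) = (1 + x ^ p) ^ (1/p-2) * (1 + x ^ p) := by
    rw [show 1/p-1 = (1/p-2)+1 by ring, Real.rpow_add hz, Real.rpow_one]
  have i4 : (1 + x ^ p) ^ (1/p-1-1) = (1 + x ^ p) ^ (1/p-2) := by
    rw [show 1/p-1-1 = 1/p-2 by ring]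
  have r1 : (1 + x ^ p) ^ (1-1/p) = (1 + x ^ p) * (1 + x ^ p) ^ (-1/p) := by
    rw [show (1:ℝ)-1/p = 1 + -1/p by ring, Real.rpow_add hz, Real.rpow_one]
  have r2 : (1 + x ^ p) ^ (1-1/p) * (1 + x ^ p) ^ (1/p-2) = (1 + x ^ p)⁻¹ := by
    rw [← Real.rpow_add hz, show 1-1/p+(1/p-2) = (-1:ℝ) by ring, Real.rpow_neg_one]
  have i8 : x ^ (p-2) * x * x = x ^ p := by
    have e : x ^ ((p-2)+1+1) = x ^ (p-2) * x * x := by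
      rw [Real.rpow_add hx, Real.rpow_add hx, Real.rpow_one]
    rw [← e]; congr 1; ring
  have hpne : p ≠ 0 := by linarith
  rw [r1] at r2
  rw [i2, i4, i1, i3, r1]
  set q := x ^ p with hq
  set u := x ^ (p-2) with hu
  set w := (1 + q) ^ (1/p-2) with hw
  set s := (1 + q) ^ (-1/p) with hs
  set a := arcsinhp p x with ha
  have hzne' : (1:ℝ) + q ≠ 0 := hzne
  field_simp
  field_simp at r2
  linear_combination (p*u*x) * r2 - ((p-1)*u*w*(1+q)*a) * i8

lemma G_pos {p : ℝ} (hp : 1 < p) {y : ℝ} (hy : 0 < y) :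
    y ^ (p-1) * (1 + y ^ p) ^ (1/p-1) * arcsinhp p y < Real.log (1 + y ^ p) := by
  set G : ℝ → ℝ :=
    fun y => Real.log (1 + y ^ p) - y ^ (p-1) * (1 + y ^ p) ^ (1/p-1) * arcsinhp p y with hGdef
  have hcont : ContinuousOn G (Set.Ici 0) := by
    intro t ht
    have ht0 : (0:ℝ) ≤ t := ht
    have hz : (0:ℝ) < 1 + t ^ p := by
      have := Real.rpow_nonneg ht0 p; linarith
    have c1 : ContinuousAt (fun t : ℝ => t ^ p) t :=
      Real.continuousAt_rpow_const t p (Or.inr (by linarith))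
    have c2 : ContinuousAt (fun t : ℝ => 1 + t ^ p) t := continuousAt_const.add c1
    have clog := c2.log hz.ne'
    have c3 : ContinuousAt (fun t : ℝ => t ^ (p-1)) t :=
      Real.continuousAt_rpow_const t (p-1) (Or.inr (by linarith))
    have c4 : ContinuousAt (fun t : ℝ => (1 + t ^ p) ^ (1/p-1)) t :=
      c2.rpow_const (Or.inl hz.ne')
    have cA := (hA_deriv hp ht0).continuousAt
    exact (clog.sub ((c3.mul c4).mul cA)).continuousWithinAt
  have hmono : StrictMonoOn G (Set.Ici 0) := by
    refine strictMonoOn_of_deriv_pos (convex_Ici 0) hcont ?_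
    intro x hx
    rw [interior_Ici] at hx
    have hx : (0:ℝ) < x := hx
    rw [(G_deriv hp hx).deriv]
    have hz : (0:ℝ) < 1 + x ^ p := by positivity
    have hv : 1 < (1 + x ^ p) ^ (1-1/p) := by
      refine (Real.one_lt_rpow_iff_of_pos hz).2 (Or.inl ⟨?_, ?_⟩)
      · have := Real.rpow_pos_of_pos hx p; linarith
      · have h2 : (0:ℝ) < 1/p := by positivity
        have h3 : 1/p < 1 := by
          rw [div_lt_one (by linarith)]; linarith
        linarith
    have hsub : 0 < x * (1 + x ^ p) ^ (1-1/p) - arcsinhp p x := by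
      have h1 : arcsinhp p x ≤ x := A_le hp hx.le
      have h2 : x * 1 < x * (1 + x ^ p) ^ (1-1/p) := by
        exact mul_lt_mul_of_pos_left hv hx
      rw [mul_one] at h2
      linarith
    have hu : (0:ℝ) < x ^ (p-2) := Real.rpow_pos_of_pos hx _
    have hw : (0:ℝ) < (1 + x ^ p) ^ (1/p-2) := Real.rpow_pos_of_pos hz _
    have hp1 : (0:ℝ) < p - 1 := by linarith
    positivity
  have h0 : G 0 = 0 := by
    have hz0 : (0:ℝ) ^ p = 0 := Real.zero_rpow (by linarith)
    have hz1 : (0:ℝ) ^ (p-1) = 0 := Real.zero_rpow (ne_of_gt (show (0:ℝ) < p - 1 by linarith))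
    simp [hGdef, hz0, hz1]
  have hlt := hmono Set.self_mem_Ici (Set.mem_Ici.2 hy.le) hy
  rw [h0] at hlt
  simp only [hGdef] at hlt
  linarith

/-- For `p > 1`, `y ↦ ln(1 + y^p)/(p · arcsinhₚ(y)^p)` is strictly decreasing on `(0, ∞)`;
i.e. `x ↦ ln(coshₚ x)/x^p` is strictly decreasing for `x > 0`. -/
theorem strictAntiOn_log_coshp_div (p : ℝ) (hp : 1 < p) :
    StrictAntiOn (fun y : ℝ => Real.log (1 + y ^ p) / (p * arcsinhp p y ^ p))
      (Set.Ioi 0) := by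
  have hp0 : (0:ℝ) < p := by linarith
  have hf : ∀ y ∈ Set.Ioi (0:ℝ),
      HasDerivAt (fun y : ℝ => Real.log (1 + y ^ p) / (p * arcsinhp p y ^ p))
        ((p * y ^ (p-1) / (1 + y ^ p) * (p * arcsinhp p y ^ p) -
          Real.log (1 + y ^ p) *
            (p * ((1 + y ^ p) ^ (-1/p) * p * arcsinhp p y ^ (p-1)))) /
          (p * arcsinhp p y ^ p) ^ 2) y := by
    intro y hy
    have hy : (0:ℝ) < y := hy
    have hz : (0:ℝ) < 1 + y ^ p := by positivity
    have h1 : HasDerivAt (fun t : ℝ => t ^ p) (p * y ^ (p-1)) y :=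
      Real.hasDerivAt_rpow_const (Or.inl hy.ne')
    have h2 : HasDerivAt (fun t : ℝ => 1 + t ^ p) (p * y ^ (p-1)) y := h1.const_add 1
    have h3 : HasDerivAt (fun t : ℝ => Real.log (1 + t ^ p)) (p * y ^ (p-1) / (1 + y ^ p)) y :=
      h2.log hz.ne'
    have hApos := A_pos hp hy
    have hApow : HasDerivAt (fun t : ℝ => arcsinhp p t ^ p)
        ((1 + y ^ p) ^ (-1/p) * p * arcsinhp p y ^ (p-1)) y :=
      (hA_deriv hp hy.le).rpow_const (Or.inl hApos.ne')
    have hD := hApow.const_mul p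
    have hDne : p * arcsinhp p y ^ p ≠ 0 := by
      have := Real.rpow_pos_of_pos hApos p
      positivity
    exact h3.div hD hDne
  refine strictAntiOn_of_deriv_neg (convex_Ioi 0) ?_ ?_
  · exact fun y hy => ((hf y hy).continuousAt).continuousWithinAt
  · intro x hx
    rw [interior_Ioi] at hx
    have hx0 : (0:ℝ) < x := hx
    rw [(hf x hx).deriv]
    have hz : (0:ℝ) < 1 + x ^ p := by positivity
    have hApos := A_pos hp hx0
    set a := arcsinhp p x with ha
    have hs : (0:ℝ) < (1 + x ^ p) ^ (-1/p) := Real.rpow_pos_of_pos hz _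
    have key := G_pos hp hx0
    have i5 : (1 + x ^ p) ^ (1/p-1) * (1 + x ^ p) ^ (-1/p) = (1 + x ^ p)⁻¹ := by
      rw [← Real.rpow_add hz, show 1/p-1 + -1/p = (-1:ℝ) by ring, Real.rpow_neg_one]
    have i9 : a ^ p = a ^ (p-1) * a := by
      have e : a ^ ((p-1)+1) = a ^ (p-1) * a := by
        rw [Real.rpow_add hApos, Real.rpow_one]
      rw [← e]; congr 1; ring
    have h2 : x ^ (p-1) * a * (1 + x ^ p)⁻¹ <
        (1 + x ^ p) ^ (-1/p) * Real.log (1 + x ^ p) := by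
      calc x ^ (p-1) * a * (1 + x ^ p)⁻¹
          = (1 + x ^ p) ^ (-1/p) * (x ^ (p-1) * (1 + x ^ p) ^ (1/p-1) * a) := by
            rw [← i5]; ring
        _ < (1 + x ^ p) ^ (-1/p) * Real.log (1 + x ^ p) :=
            mul_lt_mul_of_pos_left key hs
    have hnum : p * x ^ (p-1) / (1 + x ^ p) * (p * a ^ p) -
        Real.log (1 + x ^ p) * (p * ((1 + x ^ p) ^ (-1/p) * p * a ^ (p-1))) =
        p ^ 2 * a ^ (p-1) *
          (x ^ (p-1) * a * (1 + x ^ p)⁻¹ -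
            (1 + x ^ p) ^ (-1/p) * Real.log (1 + x ^ p)) := by
      rw [i9]; ring
    rw [hnum]
    have hap : (0:ℝ) < a ^ (p-1) := Real.rpow_pos_of_pos hApos _
    have hDpos : (0:ℝ) < (p * a ^ p) ^ 2 := by
      have := Real.rpow_pos_of_pos hApos p
      positivity
    exact div_neg_of_neg_of_pos
      (mul_neg_of_pos_of_neg (by positivity) (by linarith)) hDpos
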